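/- Let N ≥ 1 be odd, κ ∈ ℕ with κ ≥ 1, ε > 0, and define v₁(t) = cos(2κπ t/ε), v₂(t) = sin(2Nκπ t/ε). Then for every k with 0 ≤ k ≤ N, the iterated integral I_{k,N+1}(ε) = ∫₀^ε ∫₀^{s₁} ⋯ ∫₀^{s_N} w₁(s₁)⋯w_{N+1}(s_{N+1}) ds_{N+1}⋯ds₁, where w_j = v₁ for all j ≠ k+1 and w_{k+1} = v₂, equals ε^{N+1} (-1)^{⌊N/2⌋ + k} / ((4πκ)^N · k! · (N-k)!). -/

import Mathlib

open intervalIntegral Real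

/-- Iterated integral `∫₀^t f₁(s₁) ∫₀^{s₁} f₂(s₂) ⋯ ds₂ ds₁` of a list of functions. -/
noncomputable def iterInt : List (ℝ → ℝ) → ℝ → ℝ
  | [], _ => 1
  | f :: fs, t => ∫ s in (0:ℝ)..t, f s * iterInt fs s

open Nat Finset

lemma ofFn_ite {α : Type*} (v₁ v₂ : α) : ∀ (n k : ℕ), k ≤ n →
    List.ofFn (fun j : Fin (n+1) => if (j : ℕ) = k then v₂ else v₁)
      = List.replicate k v₁ ++ v₂ :: List.replicate (n - k) v₁ := by
  intro n
  induction n with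
  | zero =>
    intro k hk
    interval_cases k
    simp
  | succ n ih =>
    intro k hk
    rw [List.ofFn_succ]
    cases k with
    | zero =>
      simp [List.ofFn_const, List.replicate_succ]
    | succ k =>
      have hk' : k ≤ n := by omega
      have : (fun j : Fin (n+1) => if ((j.succ : Fin (n+2)) : ℕ) = k + 1 then v₂ else v₁)
          = (fun j : Fin (n+1) => if (j : ℕ) = k then v₂ else v₁) := by
        funext j
        simp [Fin.val_succ]
      rw [this, ih k hk']
      simp [List.replicate_succ, Nat.succ_sub_succ]

lemma neg_one_pow_sub' {a b : ℕ} (h : b ≤ a) : ((-1:ℝ))^(a-b) = (-1)^a * (-1)^b := by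
  have h1 : ((-1:ℝ))^(a-b) * (-1)^b = (-1)^a := by
    rw [← pow_add, Nat.sub_add_cancel h]
  have h2 : ((-1:ℝ))^b * (-1)^b = 1 := by
    rw [← pow_add, ← two_mul, pow_mul]; norm_num
  calc ((-1:ℝ))^(a-b) = ((-1:ℝ))^(a-b) * ((-1:ℝ)^b * (-1)^b) := by rw [h2, mul_one]
    _ = (-1)^a * (-1)^b := by rw [← mul_assoc, h1]

lemma alt_sum (n : ℕ) (hn : n ≠ 0) :
    ∑ i ∈ Finset.range (n+1), (-1:ℝ)^(n-i) / (i ! * (n-i)!) = 0 := by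
  have key := Int.alternating_sum_range_choose (n := n)
  rw [if_neg hn] at key
  have keyR : ∑ i ∈ Finset.range (n+1), (-1:ℝ)^i * (n.choose i) = 0 := by
    exact_mod_cast congrArg (Int.cast : ℤ → ℝ) key
  have : ∀ i ∈ Finset.range (n+1), (-1:ℝ)^(n-i) / (i ! * (n-i)!)
      = ((-1:ℝ)^n / n !) * ((-1:ℝ)^i * (n.choose i)) := by
    intro i hi
    rw [Finset.mem_range] at hi
    have hin : i ≤ n := by omega
    rw [Nat.cast_choose ℝ hin, neg_one_pow_sub' hin]
    have : ((i)! : ℝ) * ((n-i)! : ℝ) ≠ 0 := by positivity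
    field_simp
  rw [Finset.sum_congr rfl this, ← Finset.mul_sum, keyR, mul_zero]

section Aux
variable {v₁ v₂ A : ℝ → ℝ}
  (hv₁ : Continuous v₁) (hv₂ : Continuous v₂)
  (hA : ∀ t, HasDerivAt A (v₁ t) t) (hA0 : A 0 = 0)

include hv₁ hA hA0 in
lemma iterInt_replicate (n : ℕ) (t : ℝ) :
    iterInt (List.replicate n v₁) t = A t ^ n / n ! := by
  have hAc : Continuous A :=
    (Differentiable.continuous (fun s => (hA s).differentiableAt))
  induction n generalizing t with
  | zero => simp [iterInt]
  | succ n ih =>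
    rw [List.replicate_succ]
    show (∫ s in (0:ℝ)..t, v₁ s * iterInt (List.replicate n v₁) s) = _
    rw [intervalIntegral.integral_congr (g := fun s => v₁ s * (A s ^ n / n !))
      (fun s _ => by rw [ih])]
    have key : ∀ s : ℝ, HasDerivAt (fun u => A u ^ (n+1) / (n+1)!)
        (v₁ s * (A s ^ n / n !)) s := by
      intro s
      have h1 := (((hA s).pow (n+1)).div_const ((n+1)! : ℝ))
      refine h1.congr_deriv (Eq.symm ?_)
      have hfac : ((n)! : ℝ) ≠ 0 := by positivity
      have hfac2 : ((n+1)! : ℝ) ≠ 0 := by positivity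
      rw [Nat.factorial_succ]
      push_cast
      field_simp
    rw [intervalIntegral.integral_eq_sub_of_hasDerivAt (fun s _ => key s)
      ((hv₁.mul ((hAc.pow n).div_const _)).intervalIntegrable _ _)]
    simp [hA0]

include hv₁ hv₂ hA hA0 in
lemma iterInt_main (j m : ℕ) (t : ℝ) :
    iterInt (List.replicate m v₁ ++ v₂ :: List.replicate j v₁) t
      = ∑ i ∈ Finset.range (m+1), ((-1:ℝ)^(m-i) / (j ! * i ! * (m-i)!)) *
          (A t ^ i * ∫ u in (0:ℝ)..t, v₂ u * A u ^ (j + (m-i))) := by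
  have hAc : Continuous A :=
    (Differentiable.continuous (fun s => (hA s).differentiableAt))
  have hGd : ∀ (p : ℕ) (s : ℝ), HasDerivAt (fun r => ∫ u in (0:ℝ)..r, v₂ u * A u ^ p)
      (v₂ s * A s ^ p) s := by
    intro p s
    have hc : Continuous (fun u => v₂ u * A u ^ p) := hv₂.mul (hAc.pow p)
    exact intervalIntegral.integral_hasDerivAt_right (hc.intervalIntegrable _ _)
      (hc.stronglyMeasurableAtFilter _ _) hc.continuousAt
  have hGc : ∀ p : ℕ, Continuous (fun r => ∫ u in (0:ℝ)..r, v₂ u * A u ^ p) :=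
    fun p => Differentiable.continuous (fun s => (hGd p s).differentiableAt)
  induction m generalizing t with
  | zero =>
    simp only [List.replicate, List.nil_append]
    show (∫ s in (0:ℝ)..t, v₂ s * iterInt (List.replicate j v₁) s) = _
    rw [intervalIntegral.integral_congr
      (g := fun s => (v₂ s * A s ^ j) / j !)
      (fun s _ => by rw [iterInt_replicate hv₁ hA hA0]; ring)]
    rw [intervalIntegral.integral_div]
    simp
    rw [div_eq_inv_mul]
  | succ m ih =>
    rw [List.replicate_succ, List.cons_append]
    show (∫ s in (0:ℝ)..t, v₁ s *
        iterInt (List.replicate m v₁ ++ v₂ :: List.replicate j v₁) s) = _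
    rw [intervalIntegral.integral_congr
      (g := fun s => v₁ s * ∑ i ∈ Finset.range (m+1), ((-1:ℝ)^(m-i) / (j ! * i ! * (m-i)!)) *
          (A s ^ i * ∫ u in (0:ℝ)..s, v₂ u * A u ^ (j + (m-i))))
      (fun s _ => by rw [ih])]
    -- FTC with explicit antiderivative
    have hFd : ∀ s : ℝ, HasDerivAt
        (fun r => ∑ i ∈ Finset.range (m+2), ((-1:ℝ)^(m+1-i) / (j ! * i ! * (m+1-i)!)) *
          (A r ^ i * ∫ u in (0:ℝ)..r, v₂ u * A u ^ (j + (m+1-i))))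
        (v₁ s * ∑ i ∈ Finset.range (m+1), ((-1:ℝ)^(m-i) / (j ! * i ! * (m-i)!)) *
          (A s ^ i * ∫ u in (0:ℝ)..s, v₂ u * A u ^ (j + (m-i)))) s := by
      intro s
      have hterm : ∀ i ∈ Finset.range (m+2), HasDerivAt
          (fun r => ((-1:ℝ)^(m+1-i) / (j ! * i ! * (m+1-i)!)) *
            (A r ^ i * ∫ u in (0:ℝ)..r, v₂ u * A u ^ (j + (m+1-i))))
          (((-1:ℝ)^(m+1-i) / (j ! * i ! * (m+1-i)!)) *
            (((i : ℝ) * A s ^ (i-1) * v₁ s) * (∫ u in (0:ℝ)..s, v₂ u * A u ^ (j + (m+1-i)))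
              + A s ^ i * (v₂ s * A s ^ (j + (m+1-i))))) s := by
        intro i _
        exact (((hA s).pow i).mul (hGd _ s)).const_mul _
      have hsum := HasDerivAt.fun_sum hterm
      refine hsum.congr_deriv (Eq.symm ?_)
      rw [Finset.sum_congr rfl (fun i _ => mul_add (((-1:ℝ)^(m+1-i) / (j ! * i ! * (m+1-i)!))) _ _),
        Finset.sum_add_distrib]
      have hS2 : (∑ i ∈ Finset.range (m+2), ((-1:ℝ)^(m+1-i) / (j ! * i ! * (m+1-i)!)) *
          (A s ^ i * (v₂ s * A s ^ (j + (m+1-i))))) = 0 := by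
        have : ∀ i ∈ Finset.range (m+2), ((-1:ℝ)^(m+1-i) / (j ! * i ! * (m+1-i)!)) *
            (A s ^ i * (v₂ s * A s ^ (j + (m+1-i))))
            = (v₂ s * A s ^ (j+m+1) / j !) * ((-1:ℝ)^(m+1-i) / (i ! * (m+1-i)!)) := by
          intro i hi
          rw [Finset.mem_range] at hi
          have hpow : A s ^ i * A s ^ (j + (m+1-i)) = A s ^ (j+m+1) := by
            rw [← pow_add]; congr 1; omega
          have h1 : ((j)! : ℝ) ≠ 0 := by positivity
          have h2 : ((i)! : ℝ) ≠ 0 := by positivity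
          have h3 : (((m+1-i))! : ℝ) ≠ 0 := by positivity
          field_simp
          rw [show A s ^ i * v₂ s * A s ^ (j + (m+1-i)) = v₂ s * (A s ^ i * A s ^ (j + (m+1-i))) by ring, hpow]
        rw [Finset.sum_congr rfl this, ← Finset.mul_sum, alt_sum (m+1) (Nat.succ_ne_zero m), mul_zero]
      rw [hS2, add_zero]
      conv_rhs => rw [Finset.sum_range_succ']
      simp only [Nat.cast_zero, zero_mul, mul_zero, zero_add, add_zero, Nat.succ_sub_succ]
      rw [Finset.mul_sum]
      refine Finset.sum_congr rfl (fun i hi => ?_)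
      have h1 : ((j)! : ℝ) ≠ 0 := by positivity
      have h2 : ((i)! : ℝ) ≠ 0 := by positivity
      have h3 : (((m-i))! : ℝ) ≠ 0 := by positivity
      have hfs : (((i+1))! : ℝ) = ((i:ℝ)+1) * (i)! := by
        rw [Nat.factorial_succ]; push_cast; ring
      rw [hfs, Nat.sub_zero]
      have hi1 : ((i:ℝ)+1) ≠ 0 := by positivity
      push_cast
      field_simp
    have hF0 : (∑ i ∈ Finset.range (m+2), ((-1:ℝ)^(m+1-i) / (j ! * i ! * (m+1-i)!)) *
          (A (0:ℝ) ^ i * ∫ u in (0:ℝ)..(0:ℝ), v₂ u * A u ^ (j + (m+1-i)))) = 0 := by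
      refine Finset.sum_eq_zero (fun i _ => ?_)
      rw [intervalIntegral.integral_same, mul_zero, mul_zero]
    have hcont : Continuous (fun s => v₁ s * ∑ i ∈ Finset.range (m+1),
        ((-1:ℝ)^(m-i) / (j ! * i ! * (m-i)!)) *
          (A s ^ i * ∫ u in (0:ℝ)..s, v₂ u * A u ^ (j + (m-i)))) := by
      refine hv₁.mul (continuous_finset_sum _ (fun i _ => continuous_const.mul ?_))
      exact (hAc.pow i).mul (hGc _)
    rw [intervalIntegral.integral_eq_sub_of_hasDerivAt (fun s _ => hFd s)
      (hcont.intervalIntegrable _ _), hF0, sub_zero]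
end Aux

section Trig
variable {ε : ℝ} (hε : 0 < ε) {c : ℝ} (hc : 0 < c) (hcε : ∃ κ : ℕ, c * ε = κ * (2 * π))

-- pointwise product-to-sum
lemma key1 (a x : ℝ) (n : ℕ) : Real.sin ((a+1)*x) * Real.sin x ^ (n+1)
    = (Real.cos (a*x) * Real.sin x ^ n - Real.cos ((a+2)*x) * Real.sin x ^ n)/2 := by
  rw [show a*x = (a+1)*x - x by ring, show (a+2)*x = (a+1)*x + x by ring,
    Real.cos_sub, Real.cos_add, pow_succ]
  ring

lemma key2 (a x : ℝ) (n : ℕ) : Real.cos ((a+1)*x) * Real.sin x ^ (n+1)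
    = (Real.sin ((a+2)*x) * Real.sin x ^ n - Real.sin (a*x) * Real.sin x ^ n)/2 := by
  rw [show a*x = (a+1)*x - x by ring, show (a+2)*x = (a+1)*x + x by ring,
    Real.sin_sub, Real.sin_add, pow_succ]
  ring

include hc hcε in
lemma base_sin (m : ℕ) (hm : 1 ≤ m) : (∫ u in (0:ℝ)..ε, Real.sin (m*(c*u))) = 0 := by
  obtain ⟨κ, hκ⟩ := hcε
  have hmc : (m:ℝ) * c ≠ 0 := by positivity
  have hd : ∀ u : ℝ, HasDerivAt (fun u => -Real.cos (m*(c*u)) / (m*c))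
      (Real.sin (m*(c*u))) u := by
    intro u
    have h1 : HasDerivAt (fun u : ℝ => (m:ℝ)*(c*u)) ((m:ℝ)*c) u := by
      simpa [mul_assoc] using (hasDerivAt_id u).const_mul ((m:ℝ)*c)
    have := ((Real.hasDerivAt_cos ((m:ℝ)*(c*u))).comp u h1).neg.div_const ((m:ℝ)*c)
    refine this.congr_deriv (Eq.symm ?_)
    field_simp
  rw [intervalIntegral.integral_eq_sub_of_hasDerivAt (fun u _ => hd u)
    ((by fun_prop : Continuous fun u => Real.sin (m*(c*u))).intervalIntegrable _ _)]
  have h2 : (m:ℝ)*(c*ε) = (m*κ : ℕ) * (2*π) := by rw [← mul_assoc, mul_assoc (m:ℝ), hκ]; push_cast; ring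
  rw [h2, Real.cos_nat_mul_two_pi]
  simp

include hc hcε in
lemma base_cos (m : ℕ) (hm : 1 ≤ m) : (∫ u in (0:ℝ)..ε, Real.cos (m*(c*u))) = 0 := by
  obtain ⟨κ, hκ⟩ := hcε
  have hmc : (m:ℝ) * c ≠ 0 := by positivity
  have hd : ∀ u : ℝ, HasDerivAt (fun u => Real.sin (m*(c*u)) / (m*c))
      (Real.cos (m*(c*u))) u := by
    intro u
    have h1 : HasDerivAt (fun u : ℝ => (m:ℝ)*(c*u)) ((m:ℝ)*c) u := by
      simpa [mul_assoc] using (hasDerivAt_id u).const_mul ((m:ℝ)*c)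
    have := ((Real.hasDerivAt_sin ((m:ℝ)*(c*u))).comp u h1).div_const ((m:ℝ)*c)
    refine this.congr_deriv (Eq.symm ?_)
    field_simp
  rw [intervalIntegral.integral_eq_sub_of_hasDerivAt (fun u _ => hd u)
    ((by fun_prop : Continuous fun u => Real.cos (m*(c*u))).intervalIntegrable _ _)]
  have h2 : (m:ℝ)*(c*ε) = (2*(m*κ) : ℕ) * π := by rw [← mul_assoc, mul_assoc (m:ℝ), hκ]; push_cast; ring
  rw [h2, Real.sin_nat_mul_pi]
  simp

include hc hcε in
lemma vanish : ∀ n m : ℕ, n < m →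
    (∫ u in (0:ℝ)..ε, Real.sin (m*(c*u)) * Real.sin (c*u) ^ n) = 0 ∧
    (∫ u in (0:ℝ)..ε, Real.cos (m*(c*u)) * Real.sin (c*u) ^ n) = 0 := by
  have intS : ∀ (m n : ℕ), IntervalIntegrable
      (fun u => Real.sin (m*(c*u)) * Real.sin (c*u) ^ n) MeasureTheory.volume 0 ε :=
    fun m n => (by fun_prop : Continuous _).intervalIntegrable _ _
  have intC : ∀ (m n : ℕ), IntervalIntegrable
      (fun u => Real.cos (m*(c*u)) * Real.sin (c*u) ^ n) MeasureTheory.volume 0 ε :=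
    fun m n => (by fun_prop : Continuous _).intervalIntegrable _ _
  intro n
  induction n with
  | zero =>
    intro m hm
    constructor
    · simpa using base_sin hc hcε m hm
    · simpa using base_cos hc hcε m hm
  | succ n ih =>
    intro m hm
    obtain ⟨m', rfl⟩ : ∃ m', m = m'+1 := ⟨m-1, by omega⟩
    have h1 : n < m' := by omega
    have h2 : n < m'+2 := by omega
    constructor
    · have hpt : ∀ u : ℝ, Real.sin ((m'+1 : ℕ)*(c*u)) * Real.sin (c*u)^(n+1)
          = (Real.cos ((m' : ℕ)*(c*u)) * Real.sin (c*u)^n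
            - Real.cos ((m'+2 : ℕ)*(c*u)) * Real.sin (c*u)^n)/2 := by
        intro u
        have := key1 (m' : ℝ) (c*u) n
        push_cast
        convert this using 3 <;> push_cast <;> ring
      rw [intervalIntegral.integral_congr (fun u _ => hpt u), intervalIntegral.integral_div,
        intervalIntegral.integral_sub (intC m' n) (intC (m'+2) n),
        (ih m' h1).2, (ih (m'+2) h2).2]
      norm_num
    · have hpt : ∀ u : ℝ, Real.cos ((m'+1 : ℕ)*(c*u)) * Real.sin (c*u)^(n+1)
          = (Real.sin ((m'+2 : ℕ)*(c*u)) * Real.sin (c*u)^n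
            - Real.sin ((m' : ℕ)*(c*u)) * Real.sin (c*u)^n)/2 := by
        intro u
        have := key2 (m' : ℝ) (c*u) n
        push_cast
        convert this using 3 <;> push_cast <;> ring
      rw [intervalIntegral.integral_congr (fun u _ => hpt u), intervalIntegral.integral_div,
        intervalIntegral.integral_sub (intS (m'+2) n) (intS m' n),
        (ih (m'+2) h2).1, (ih m' h1).1]
      norm_num

include hε hc hcε in
lemma resonant : ∀ jj : ℕ, (∫ u in (0:ℝ)..ε,
      Real.sin ((2*jj+1 : ℕ)*(c*u)) * Real.sin (c*u) ^ (2*jj+1))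
    = ε * (-1:ℝ)^jj / 2^(2*jj+1) := by
  have intS : ∀ (m n : ℕ), IntervalIntegrable
      (fun u => Real.sin (m*(c*u)) * Real.sin (c*u) ^ n) MeasureTheory.volume 0 ε :=
    fun m n => (by fun_prop : Continuous _).intervalIntegrable _ _
  have intC : ∀ (m n : ℕ), IntervalIntegrable
      (fun u => Real.cos (m*(c*u)) * Real.sin (c*u) ^ n) MeasureTheory.volume 0 ε :=
    fun m n => (by fun_prop : Continuous _).intervalIntegrable _ _
  intro jj
  induction jj with
  | zero =>
    have hpt : ∀ u : ℝ, Real.sin ((2*0+1 : ℕ)*(c*u)) * Real.sin (c*u)^(2*0+1)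
        = (Real.cos (0*(c*u)) * Real.sin (c*u)^0
          - Real.cos (((2:ℕ):ℝ)*(c*u)) * Real.sin (c*u)^0)/2 := by
      intro u
      have := key1 (0:ℝ) (c*u) 0
      push_cast
      convert this using 3 <;> push_cast <;> ring
    rw [intervalIntegral.integral_congr (fun u _ => hpt u), intervalIntegral.integral_div]
    have i1 : IntervalIntegrable (fun u : ℝ => Real.cos (0*(c*u)) * Real.sin (c*u)^0)
        MeasureTheory.volume 0 ε := (by fun_prop : Continuous _).intervalIntegrable _ _
    have i2 : IntervalIntegrable (fun u : ℝ => Real.cos (((2:ℕ):ℝ)*(c*u)) * Real.sin (c*u)^0)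
        MeasureTheory.volume 0 ε := (by fun_prop : Continuous _).intervalIntegrable _ _
    rw [intervalIntegral.integral_sub i1 i2]
    have e2 : (∫ u in (0:ℝ)..ε, Real.cos (((2:ℕ):ℝ)*(c*u)) * Real.sin (c*u)^0) = 0 := by
      simpa using base_cos hc hcε 2 (by norm_num)
    have e1 : (∫ u in (0:ℝ)..ε, Real.cos (0*(c*u)) * Real.sin (c*u)^0) = ε := by
      simp
    rw [e1, e2]
    norm_num
  | succ jj ih =>
    have hpt : ∀ u : ℝ, Real.sin ((2*(jj+1)+1 : ℕ)*(c*u)) * Real.sin (c*u)^(2*(jj+1)+1)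
        = (Real.cos ((2*jj+2 : ℕ)*(c*u)) * Real.sin (c*u)^(2*jj+2)
          - Real.cos ((2*jj+4 : ℕ)*(c*u)) * Real.sin (c*u)^(2*jj+2))/2 := by
      intro u
      have := key1 ((2*jj+2 : ℕ) : ℝ) (c*u) (2*jj+2)
      push_cast
      push_cast at this
      convert this using 3 <;> ring
    rw [intervalIntegral.integral_congr (fun u _ => hpt u), intervalIntegral.integral_div,
      intervalIntegral.integral_sub (intC (2*jj+2) (2*jj+2)) (intC (2*jj+4) (2*jj+2)),
      (vanish hc hcε (2*jj+2) (2*jj+4) (by omega)).2]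
    have hpt2 : ∀ u : ℝ, Real.cos ((2*jj+2 : ℕ)*(c*u)) * Real.sin (c*u)^(2*jj+2)
        = (Real.sin ((2*jj+3 : ℕ)*(c*u)) * Real.sin (c*u)^(2*jj+1)
          - Real.sin ((2*jj+1 : ℕ)*(c*u)) * Real.sin (c*u)^(2*jj+1))/2 := by
      intro u
      have := key2 ((2*jj+1 : ℕ) : ℝ) (c*u) (2*jj+1)
      push_cast
      push_cast at this
      convert this using 3 <;> ring
    rw [intervalIntegral.integral_congr (fun u _ => hpt2 u), intervalIntegral.integral_div,
      intervalIntegral.integral_sub (intS (2*jj+3) (2*jj+1)) (intS (2*jj+1) (2*jj+1)),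
      (vanish hc hcε (2*jj+1) (2*jj+3) (by omega)).1, ih]
    rw [pow_succ]
    ring

end Trig

/-- for odd `N ≥ 1`, `κ ≥ 1`, `ε > 0`, with
`v₁(t) = cos(2κπ t/ε)`, `v₂(t) = sin(2Nκπ t/ε)`, the iterated integral over the simplex
with `v₂` in the `(k+1)`-st slot and `v₁` elsewhere equals
`ε^{N+1} (-1)^{⌊N/2⌋+k} / ((4πκ)^N k! (N-k)!)`. -/
theorem iterated_integral_value (N : ℕ) (hN : 1 ≤ N) (hodd : Odd N)
    (κ : ℕ) (hκ : 1 ≤ κ) (ε : ℝ) (hε : 0 < ε)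
    (v₁ v₂ : ℝ → ℝ)
    (hv₁ : v₁ = fun t => Real.cos (2 * κ * π * t / ε))
    (hv₂ : v₂ = fun t => Real.sin (2 * N * κ * π * t / ε))
    (k : ℕ) (hk : k ≤ N) :
    iterInt (List.ofFn (fun j : Fin (N + 1) => if (j : ℕ) = k then v₂ else v₁)) ε =
      ε ^ (N + 1) * (-1 : ℝ) ^ (N / 2 + k) /
        ((4 * π * κ) ^ N * (Nat.factorial k) * (Nat.factorial (N - k))) := by
  have hπ : 0 < π := Real.pi_pos
  have hεne : ε ≠ 0 := ne_of_gt hε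
  have hκR : (0:ℝ) < κ := by exact_mod_cast Nat.lt_of_lt_of_le Nat.zero_lt_one hκ
  set c : ℝ := 2*κ*π/ε with hcdef
  have hc : 0 < c := by positivity
  have hcne : c ≠ 0 := ne_of_gt hc
  have hcε' : c * ε = (κ:ℝ) * (2 * π) := by rw [hcdef, div_mul_cancel₀ _ hεne]; ring
  have hcε : ∃ κ' : ℕ, c * ε = κ' * (2*π) := ⟨κ, hcε'⟩
  have hv1' : v₁ = fun t => Real.cos (c * t) := by
    rw [hv₁]; funext t; congr 1; rw [hcdef]; ring
  have hv2' : v₂ = fun t => Real.sin ((N:ℝ) * (c * t)) := by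
    rw [hv₂]; funext t; congr 1; rw [hcdef]; ring
  set A : ℝ → ℝ := fun t => Real.sin (c*t)/c with hAdef
  have hA : ∀ t, HasDerivAt A (v₁ t) t := by
    intro t
    have h1 : HasDerivAt (fun u : ℝ => c*u) c t := by
      simpa using (hasDerivAt_id t).const_mul c
    have := ((Real.hasDerivAt_sin (c*t)).comp t h1).div_const c
    rw [hv1']
    refine this.congr_deriv (Eq.symm ?_)
    field_simp
  have hA0 : A 0 = 0 := by simp [hAdef]
  have hAε : A ε = 0 := by
    have hsin : Real.sin (c*ε) = 0 := by
      have h5 : c * ε = ((2*κ : ℕ):ℝ) * π := by rw [hcε']; push_cast; ring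
      rw [h5, Real.sin_nat_mul_pi]
    show Real.sin (c*ε)/c = 0
    rw [hsin, zero_div]
  have hv₁c : Continuous v₁ := by rw [hv1']; fun_prop
  have hv₂c : Continuous v₂ := by rw [hv2']; fun_prop
  rw [ofFn_ite v₁ v₂ N k hk, iterInt_main hv₁c hv₂c hA hA0 (N-k) k ε]
  rw [Finset.sum_eq_single 0 (fun i _ hi => by
      simp [hAε, zero_pow hi]) (fun h => absurd (Finset.mem_range.mpr (Nat.succ_pos k)) h)]
  obtain ⟨jj, hjj⟩ := hodd
  have hNeq : N = 2*jj+1 := by omega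
  subst hNeq
  have hN2 : (2*jj+1)/2 = jj := by omega
  have hexp : (2*jj+1-k) + (k-0) = 2*jj+1 := by omega
  rw [hexp]
  have hint : (∫ u in (0:ℝ)..ε, v₂ u * A u ^ (2*jj+1))
      = ε * (-1:ℝ)^jj / 2^(2*jj+1) / c^(2*jj+1) := by
    have hpt : ∀ u : ℝ, v₂ u * A u ^ (2*jj+1)
        = (Real.sin ((2*jj+1 : ℕ)*(c*u)) * Real.sin (c*u) ^ (2*jj+1)) / c^(2*jj+1) := by
      intro u
      rw [hv2', hAdef]
      push_cast
      rw [div_pow]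
      ring
    rw [intervalIntegral.integral_congr (fun u _ => hpt u), intervalIntegral.integral_div,
      resonant hε hc hcε jj]
  rw [hint, hN2]
  have hfk : ((k)! : ℝ) ≠ 0 := by positivity
  have hfnk : (((2*jj+1-k))! : ℝ) ≠ 0 := by positivity
  have hcp : c^(2*jj+1) = (2*κ*π)^(2*jj+1)/ε^(2*jj+1) := by
    rw [hcdef, div_pow]
  rw [hcp, pow_add]
  simp only [Nat.sub_zero, pow_zero, Nat.factorial_zero, Nat.cast_one, mul_one, one_mul]
  have h4 : ((4*π*κ:ℝ))^(2*jj+1) = 2^(2*jj+1) * (2*κ*π)^(2*jj+1) := by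
    rw [← mul_pow]; congr 1; ring
  rw [h4]
  field_simp
  ring
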